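/- Let G be a graph, let S ⊆ V(G) be an irredundant set, and let M ⊆ V(G) be a module of G. If M ∩ S ≠ ∅ and M ∖ S ≠ ∅, then every vertex outside M that has a neighbor in M belongs to S. -/
import Mathlib


namespace VI

open SimpleGraph

variable {V : Type*}

/-- Total weight of a set of vertices. -/
noncomputable def setWeight (w : V → ℕ) (X : Set V) : ℕ := ∑ᶠ v ∈ X, w v

/-- Maximum weight of a connected component of `G − S`. -/
noncomputable def compMax (G : SimpleGraph V) (w : V → ℕ) (S : Set V) : ℕ :=
  sSup {n | ∃ C : (G.induce Sᶜ).ConnectedComponent, n = setWeight w (Subtype.val '' C.supp)}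

/-- `w(S) + max_{C ∈ cc(G−S)} w(V(C))`. -/
noncomputable def viCost (G : SimpleGraph V) (w : V → ℕ) (S : Set V) : ℕ :=
  setWeight w S + compMax G w S

/-- The weighted vertex integrity of `G`. -/
noncomputable def wvi (G : SimpleGraph V) (w : V → ℕ) : ℕ := ⨅ S : Set V, viCost G w S

/-- Maximum number of vertices of a connected component of `G − S`. -/
noncomputable def uCompMax (G : SimpleGraph V) (S : Set V) : ℕ :=
  sSup {n | ∃ C : (G.induce Sᶜ).ConnectedComponent, n = C.supp.ncard}

/-- `|S| + max_{C ∈ cc(G−S)} |V(C)|`. -/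
noncomputable def uViCost (G : SimpleGraph V) (S : Set V) : ℕ := S.ncard + uCompMax G S

/-- The (unweighted) vertex integrity of `G`. -/
noncomputable def uvi (G : SimpleGraph V) : ℕ := ⨅ S : Set V, uViCost G S

/-- A vertex `v` is redundant w.r.t. `S` if at most one connected component of `G − S`
contains a neighbor of `v`. -/
def Redundant (G : SimpleGraph V) (S : Set V) (v : V) : Prop :=
  {C : (G.induce Sᶜ).ConnectedComponent | ∃ u : (Sᶜ : Set V), G.Adj v ↑u ∧ u ∈ C.supp}.Subsingleton

/-- `S` is irredundant if it contains no redundant vertex. -/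
def Irredundant (G : SimpleGraph V) (S : Set V) : Prop := ∀ v ∈ S, ¬ Redundant G S v

end VI

namespace VI

/-- `M` is a module of `G` if every vertex outside `M` is adjacent to all or none of `M`. -/
def IsModule {V : Type*} (G : SimpleGraph V) (M : Set V) : Prop :=
  ∀ x ∉ M, (∀ m ∈ M, G.Adj x m) ∨ (∀ m ∈ M, ¬ G.Adj x m)

end VI

open VI SimpleGraph in
/-- If an irredundant set `S` splits a module `M`, then every outside neighbor of `M` is in `S`. -/
theorem statement5 {V : Type*} [Fintype V] (G : SimpleGraph V) (S : Set V)
    (hS : Irredundant G S) (M : Set V) (hM : IsModule G M)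
    (h1 : (M ∩ S).Nonempty) (h2 : (M \ S).Nonempty)
    (x : V) (hx : x ∉ M) (hadj : ∃ m ∈ M, G.Adj x m) :
    x ∈ S := by
  by_contra hxS
  obtain ⟨s, hsM, hsS⟩ := h1
  obtain ⟨m, hmM, hmS⟩ := h2
  -- x is adjacent to all of M
  have hall : ∀ a ∈ M, G.Adj x a := by
    rcases hM x hx with h | h
    · exact h
    · obtain ⟨a, haM, haadj⟩ := hadj
      exact absurd haadj (h a haM)
  set m' : (Sᶜ : Set V) := ⟨m, hmS⟩ with hm'
  set x' : (Sᶜ : Set V) := ⟨x, hxS⟩ with hx'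
  -- any neighbor of s outside S reaches m in G − S
  have key : ∀ u : (Sᶜ : Set V), G.Adj s ↑u → (G.induce Sᶜ).Reachable u m' := by
    intro u hsu
    by_cases hum : (u : V) = m
    · have : u = m' := Subtype.ext hum
      rw [this]
    by_cases huM : (u : V) ∈ M
    · have h1 : (G.induce Sᶜ).Adj u x' := (hall u huM).symm
      have h2 : (G.induce Sᶜ).Adj x' m' := hall m hmM
      exact (h1.reachable).trans h2.reachable
    · rcases hM u huM with h | h
      · have : (G.induce Sᶜ).Adj u m' := h m hmM
        exact this.reachable
      · exact absurd hsu.symm (h s hsM)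
  have hred : Redundant G S s := by
    intro C1 hC1 C2 hC2
    obtain ⟨u1, hu1, hu1C⟩ := hC1
    obtain ⟨u2, hu2, hu2C⟩ := hC2
    have e1 : C1 = (G.induce Sᶜ).connectedComponentMk m' := by
      rw [← hu1C]
      exact SimpleGraph.ConnectedComponent.sound (key u1 hu1)
    have e2 : C2 = (G.induce Sᶜ).connectedComponentMk m' := by
      rw [← hu2C]
      exact SimpleGraph.ConnectedComponent.sound (key u2 hu2)
    rw [e1, e2]
  exact hS s hsS hred
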